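/- arXiv:math/0103181 — 3 statements merged into one kernel-verified Lean document; each statement's English description precedes it below -/
import Mathlib

section
/- For a partition μ of n, the number of pairs (T, m) where T is a standard Young tableau of shape μ and m = (m_1,...,m_n) is an integer vector with 0 ≤ m_i < α_T(i) for all i, equals n!/μ!. Here α_T(i) is defined as follows: if i sits in cell (r_i, c_i) of T, let k be the largest entry of T with c_k = c_i + 1 and k < i; set α_T(i) = r_i - r_k, and if no such k exists set α_T(i) = r_i + 1. -/
/-- The cells of the diagram of `μ` (0-based coordinates), inside an `N × N` box. -/
def diagOf (μ : ℕ → ℕ) (N : ℕ) : Finset (ℕ × ℕ) :=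
  (Finset.range N ×ˢ Finset.range N).filter fun p => p.2 < μ p.1

/-- `P` lists the positions of the entries `1,...,n` (entry `i+1` is at cell `P i`)
of a standard Young tableau of shape `μ`: it is a bijection onto the cells of `μ`,
increasing along rows and up columns. -/
def IsSYTpos (μ : ℕ → ℕ) (n : ℕ) (P : Fin n → ℕ × ℕ) : Prop :=
  Function.Injective P ∧ (∀ i, P i ∈ diagOf μ n) ∧ (∀ p ∈ diagOf μ n, ∃ i, P i = p) ∧
    (∀ i j : Fin n, (P i).1 = (P j).1 → (P i).2 < (P j).2 → i < j) ∧
    (∀ i j : Fin n, (P i).2 = (P j).2 → (P i).1 < (P j).1 → i < j)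

/-- `α_T(i)` for the tableau with position map `P` (index `i : Fin n` stands for the
entry `i+1`): if `k` is the largest entry smaller than `i+1` lying in column
`(P i).2 + 1`, then `α = (P i).1 - (P k).1`; if there is no such entry, `α = (P i).1 + 1`. -/
def alpha (n : ℕ) (P : Fin n → ℕ × ℕ) (i : Fin n) : ℕ :=
  if h : (Finset.univ.filter fun k : Fin n => k < i ∧ (P k).2 = (P i).2 + 1).Nonempty then
    (P i).1 - (P ((Finset.univ.filter fun k : Fin n => k < i ∧ (P k).2 = (P i).2 + 1).max' h)).1
  else (P i).1 + 1

/-!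
The entry `n` of a standard tableau sits at a corner `(r, μ r - 1)` of `μ`, and `α_T(n)` is the
number `a_r` of rows of length `μ r`: the entries of column `μ r` fill exactly the rows longer
than row `r`, and the latest of them is the topmost one. Deleting `n` leaves a tableau of shape
`μ - e_r` without changing the other values of `α`, so the count `N(μ)` satisfies
`N(μ) = ∑_r a_r N(μ - e_r)` over the corners `r`. Since `μ! = μ r (μ - e_r)!`, induction gives
`N(μ) μ! = ∑_r μ r a_r (n - 1)! = n!`, as the corners and their multiplicities `a_r` account
for every row exactly once: `∑_r μ r a_r = n`.
-/

open Finset Function Nat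

structure IsPartitionOf (μ : ℕ → ℕ) (n : ℕ) : Prop where
  antitone : Antitone μ
  eq_zero : ∀ t, n ≤ t → μ t = 0
  sum_eq : ∑ t ∈ range n, μ t = n

def corners (μ : ℕ → ℕ) (N : ℕ) : Finset ℕ := {r ∈ range N | μ (r + 1) < μ r}

def removeCorner (μ : ℕ → ℕ) (r : ℕ) : ℕ → ℕ := update μ r (μ r - 1)

@[simp]
lemma removeCorner_self (μ : ℕ → ℕ) (r : ℕ) : removeCorner μ r r = μ r - 1 := update_self _ _ _

lemma removeCorner_of_ne (μ : ℕ → ℕ) {r t : ℕ} (h : t ≠ r) : removeCorner μ r t = μ t :=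
  update_of_ne h _ _

lemma removeCorner_le (μ : ℕ → ℕ) (r t : ℕ) : removeCorner μ r t ≤ μ t := by
  rcases eq_or_ne t r with rfl | h
  · simp
  · rw [removeCorner_of_ne μ h]

lemma lt_removeCorner_iff {μ : ℕ → ℕ} {r : ℕ} (hr : 0 < μ r) {p : ℕ × ℕ} :
    p.2 < removeCorner μ r p.1 ↔ p.2 < μ p.1 ∧ p ≠ (r, μ r - 1) := by
  rcases eq_or_ne p.1 r with h | h
  · obtain ⟨a, b⟩ := p
    simp only at h
    subst h
    simp only [removeCorner, update_self, ne_eq, Prod.mk.injEq, true_and]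
    omega
  · simp [removeCorner, Prod.ext_iff, h]

section Partition

variable {μ : ℕ → ℕ} {n : ℕ}

lemma IsPartitionOf.le (hμ : IsPartitionOf μ n) (t : ℕ) : μ t ≤ n := by
  rcases lt_or_ge t n with ht | ht
  · exact hμ.sum_eq ▸ single_le_sum (fun _ _ => Nat.zero_le _) (mem_range.2 ht)
  · simp [hμ.eq_zero t ht]

lemma IsPartitionOf.lt_of_pos (hμ : IsPartitionOf μ n) {t : ℕ} (ht : 0 < μ t) : t < n := by
  by_contra h
  have := hμ.eq_zero t (not_lt.1 h)
  omega

lemma IsPartitionOf.mem_diagOf (hμ : IsPartitionOf μ n) {p : ℕ × ℕ} :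
    p ∈ diagOf μ n ↔ p.2 < μ p.1 := by
  simp only [diagOf, mem_filter, mem_product, mem_range, and_iff_right_iff_imp]
  intro h
  exact ⟨hμ.lt_of_pos (by omega), lt_of_lt_of_le h (hμ.le p.1)⟩

variable {r : ℕ}

lemma isPartitionOf_removeCorner (hμ : IsPartitionOf μ (n + 1)) (hr : r ∈ corners μ (n + 1)) :
    IsPartitionOf (removeCorner μ r) n := by
  obtain ⟨hrn, hcorner⟩ := mem_filter.1 hr
  have hanti : Antitone (removeCorner μ r) := by
    intro a b hab
    rcases eq_or_ne a r with rfl | ha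
    · rcases eq_or_lt_of_le hab with rfl | hlt
      · exact le_rfl
      · calc removeCorner μ a b ≤ μ b := removeCorner_le μ a b
          _ ≤ μ (a + 1) := hμ.antitone hlt
          _ ≤ removeCorner μ a a := by rw [removeCorner_self]; omega
    · calc removeCorner μ r b ≤ μ b := removeCorner_le μ r b
        _ ≤ μ a := hμ.antitone hab
        _ = removeCorner μ r a := (removeCorner_of_ne μ ha).symm
  have hsum : ∑ t ∈ range (n + 1), removeCorner μ r t = n := by
    have h1 := sum_update_of_mem hrn μ (μ r - 1)
    have h2 := sum_eq_add_sum_sdiff_singleton_of_mem hrn μ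
    rw [hμ.sum_eq] at h2
    rw [removeCorner, h1]
    omega
  have hlast : removeCorner μ r n = 0 := by
    have h := card_nsmul_le_sum (range (n + 1)) (removeCorner μ r) (removeCorner μ r n)
      fun t ht => hanti (mem_range_succ_iff.1 ht)
    rw [hsum, card_range, smul_eq_mul] at h
    nlinarith
  refine ⟨hanti, fun t ht => ?_, ?_⟩
  · rcases eq_or_lt_of_le ht with rfl | ht
    · exact hlast
    · exact Nat.eq_zero_of_le_zero (hμ.eq_zero t ht ▸ removeCorner_le μ r t)
  · rwa [sum_range_succ, hlast, add_zero] at hsum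

lemma IsPartitionOf.prod_factorial_eq (hμ : IsPartitionOf μ (n + 1))
    (hr : r ∈ corners μ (n + 1)) :
    ∏ t ∈ range (n + 1), (μ t)! = μ r * ∏ t ∈ range n, (removeCorner μ r t)! := by
  obtain ⟨hrn, hcorner⟩ := mem_filter.1 hr
  have hlast := (isPartitionOf_removeCorner hμ hr).eq_zero n le_rfl
  have hext : ∏ t ∈ range n, (removeCorner μ r t)! =
      ∏ t ∈ range (n + 1), (removeCorner μ r t)! := by
    rw [prod_range_succ, hlast, factorial_zero, mul_one]
  have herase : ∏ t ∈ (range (n + 1)).erase r, (removeCorner μ r t)! =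
      ∏ t ∈ (range (n + 1)).erase r, (μ t)! :=
    prod_congr rfl fun t ht => by rw [removeCorner_of_ne μ (ne_of_mem_erase ht)]
  rw [hext, ← mul_prod_erase _ _ hrn, ← mul_prod_erase _ (fun t => (removeCorner μ r t)!) hrn,
    herase, removeCorner_self, ← mul_assoc, mul_factorial_pred (by omega)]

end Partition

lemma sum_corners_mul_card_eq {μ : ℕ → ℕ} {N : ℕ} (hμ : Antitone μ) (hN : μ N = 0) :
    ∑ r ∈ corners μ N, μ r * #{s ∈ range N | μ s = μ r} = ∑ t ∈ range N, μ t := by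
  have hinj : Set.InjOn μ (corners μ N) := by
    intro r hr r' hr' h
    simp only [corners, mem_coe, mem_filter, mem_range] at hr hr'
    by_contra hne
    rcases Nat.lt_or_gt_of_ne hne with hlt | hlt
    · have := hμ (show r + 1 ≤ r' by omega); omega
    · have := hμ (show r' + 1 ≤ r by omega); omega
  -- the last row of a given nonzero length is a corner
  have himage : (corners μ N).image μ = {v ∈ (range N).image μ | v ≠ 0} := by
    ext v
    simp only [corners, mem_image, mem_filter, mem_range]
    constructor
    · rintro ⟨r, ⟨hr, hc⟩, rfl⟩
      exact ⟨⟨r, hr, rfl⟩, by omega⟩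
    · rintro ⟨⟨t, ht, rfl⟩, hv⟩
      have hne : ({s ∈ range N | μ s = μ t} : Finset ℕ).Nonempty := ⟨t, by simp [ht]⟩
      obtain ⟨hr, hrt⟩ := mem_filter.1 (max'_mem _ hne)
      set r := max' _ hne
      rw [mem_range] at hr
      refine ⟨r, ⟨hr, lt_of_le_of_ne (hμ r.le_succ) fun h => ?_⟩, hrt⟩
      rcases eq_or_lt_of_le (show r + 1 ≤ N by omega) with hrN | hrN
      · rw [← hrN] at hN; omega
      · have := le_max' {s ∈ range N | μ s = μ t} (r + 1)
          (mem_filter.2 ⟨mem_range.2 hrN, h.trans hrt⟩)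
        omega
  calc ∑ r ∈ corners μ N, μ r * #{s ∈ range N | μ s = μ r}
      = ∑ v ∈ (corners μ N).image μ, v * #{s ∈ range N | μ s = v} :=
        (sum_image (f := fun v => v * #{s ∈ range N | μ s = v}) hinj).symm
    _ = ∑ v ∈ (range N).image μ, v * #{s ∈ range N | μ s = v} := by
      rw [himage]
      exact sum_filter_of_ne fun v _ h => left_ne_zero_of_mul h
    _ = ∑ t ∈ range N, μ t := by
      rw [sum_comp (fun v => v) μ]
      exact sum_congr rfl fun v _ => by rw [smul_eq_mul, mul_comm]

lemma alpha_snoc {n : ℕ} (P : Fin n → ℕ × ℕ) (x : ℕ × ℕ) (i : Fin n) :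
    alpha (n + 1) (Fin.snoc P x) i.castSucc = alpha n P i := by
  unfold alpha
  set Q : Fin (n + 1) → ℕ × ℕ := Fin.snoc P x
  have hset : ({k | k < i.castSucc ∧ (Q k).2 = (Q i.castSucc).2 + 1} : Finset (Fin (n + 1))) =
      ({k | k < i ∧ (P k).2 = (P i).2 + 1} : Finset (Fin n)).image Fin.castSucc := by
    ext k
    induction k using Fin.lastCases with
    | last => simp [Q, (Fin.castSucc_lt_last i).not_gt]
    | cast k => simp [Q, Fin.castSucc_lt_castSucc_iff]
  simp only [hset, image_nonempty, max'_image Fin.strictMono_castSucc.monotone]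
  simp only [Q, Fin.snoc_castSucc]

lemma alpha_le {n : ℕ} (P : Fin n → ℕ × ℕ) (i : Fin n) : alpha n P i ≤ (P i).1 + 1 := by
  unfold alpha
  split <;> omega

def tableauPairs (μ : ℕ → ℕ) (n : ℕ) : Set ((Fin n → ℕ × ℕ) × (Fin n → ℕ)) :=
  {pm | IsSYTpos μ n pm.1 ∧ ∀ i, pm.2 i < alpha n pm.1 i}

lemma tableauPairs_finite (μ : ℕ → ℕ) (n : ℕ) : (tableauPairs μ n).Finite := by
  refine ((Set.Finite.pi' fun _ => (range n ×ˢ range n).finite_toSet).prod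
    (Set.Finite.pi' fun _ => (range (n + 1)).finite_toSet)).subset ?_
  rintro ⟨P, m⟩ ⟨hP, hm⟩
  have hbox : ∀ i, P i ∈ range n ×ˢ range n := fun i => (mem_filter.1 (hP.2.1 i)).1
  refine ⟨fun i => hbox i, fun i => mem_range.2 (?_ : m i < n + 1)⟩
  have := mem_range.1 (mem_product.1 (hbox i)).1
  have := alpha_le P i
  have : m i < alpha n P i := hm i
  omega

section Tableau

variable {μ : ℕ → ℕ} {n : ℕ}

lemma IsPartitionOf.isSYTpos_iff (hμ : IsPartitionOf μ n) {P : Fin n → ℕ × ℕ} :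
    IsSYTpos μ n P ↔ Injective P ∧ (∀ i, (P i).2 < μ (P i).1) ∧
      (∀ p : ℕ × ℕ, p.2 < μ p.1 → ∃ i, P i = p) ∧
      (∀ i j, (P i).1 = (P j).1 → (P i).2 < (P j).2 → i < j) ∧
      (∀ i j, (P i).2 = (P j).2 → (P i).1 < (P j).1 → i < j) := by
  simp only [IsSYTpos, hμ.mem_diagOf]

variable {P : Fin (n + 1) → ℕ × ℕ}

lemma IsSYTpos.snd_last_add_one (hμ : IsPartitionOf μ (n + 1)) (hP : IsSYTpos μ (n + 1) P) :
    (P (Fin.last n)).2 + 1 = μ (P (Fin.last n)).1 := by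
  obtain ⟨-, hmem, hsurj, hrow, -⟩ := hμ.isSYTpos_iff.1 hP
  have := hmem (Fin.last n)
  by_contra hne
  obtain ⟨j, hj⟩ := hsurj ((P (Fin.last n)).1, (P (Fin.last n)).2 + 1) (by dsimp only; omega)
  exact (Fin.le_last j).not_gt (hrow _ _ (by rw [hj]) (by rw [hj]; omega))

lemma IsSYTpos.fst_last_mem_corners (hμ : IsPartitionOf μ (n + 1)) (hP : IsSYTpos μ (n + 1) P) :
    (P (Fin.last n)).1 ∈ corners μ (n + 1) := by
  have hc := hP.snd_last_add_one hμ
  obtain ⟨-, hmem, hsurj, -, hcol⟩ := hμ.isSYTpos_iff.1 hP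
  refine mem_filter.2 ⟨mem_range.2 (hμ.lt_of_pos (by omega)), ?_⟩
  by_contra hle
  obtain ⟨j, hj⟩ := hsurj ((P (Fin.last n)).1 + 1, (P (Fin.last n)).2) (by dsimp only; omega)
  exact (Fin.le_last j).not_gt (hcol _ _ (by rw [hj]) (by rw [hj]; omega))

lemma IsSYTpos.last_eq (hμ : IsPartitionOf μ (n + 1)) (hP : IsSYTpos μ (n + 1) P) :
    P (Fin.last n) = ((P (Fin.last n)).1, μ (P (Fin.last n)).1 - 1) :=
  Prod.ext rfl (by have := hP.snd_last_add_one hμ; dsimp only; omega)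

lemma IsSYTpos.alpha_last (hμ : IsPartitionOf μ (n + 1)) (hP : IsSYTpos μ (n + 1) P) :
    alpha (n + 1) P (Fin.last n) = #{s ∈ range (n + 1) | μ s = μ (P (Fin.last n)).1} := by
  have hc := hP.snd_last_add_one hμ
  obtain ⟨hrN, hcorner⟩ := mem_filter.1 (hP.fst_last_mem_corners hμ)
  rw [mem_range] at hrN
  obtain ⟨-, hmem, hsurj, -, hcol⟩ := hμ.isSYTpos_iff.1 hP
  unfold alpha
  generalize (P (Fin.last n)).1 = r at hc hrN hcorner ⊢
  set F : Finset (Fin (n + 1)) := {k | k < Fin.last n ∧ (P k).2 = (P (Fin.last n)).2 + 1}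
  have hF_col : ∀ k ∈ F, (P k).2 = μ r := fun k hk => by
    rw [(mem_filter.1 hk).2.2, hc]
  have hF_row : ∀ k ∈ F, μ r < μ (P k).1 := fun k hk => hF_col k hk ▸ hmem k
  have hF_of_lt : ∀ s, μ r < μ s → ∃ k ∈ F, (P k).1 = s := fun s hs => by
    obtain ⟨k, hk⟩ := hsurj (s, μ r) hs
    have hk_ne : k ≠ Fin.last n := by
      rintro rfl
      have := congrArg Prod.snd hk
      dsimp only at this
      omega
    exact ⟨k, mem_filter.2 ⟨mem_univ _, (Fin.le_last k).lt_of_ne hk_ne, by rw [hk]; omega⟩,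
      by rw [hk]⟩
  have hsame : ∀ s, μ s = μ r ↔ s ≤ r ∧ ¬ μ r < μ s := fun s => by
    constructor
    · intro h
      refine ⟨le_of_not_gt fun hlt => ?_, by omega⟩
      have := hμ.antitone (show r + 1 ≤ s from hlt)
      omega
    · rintro ⟨hle, hn⟩
      have := hμ.antitone hle
      omega
  split_ifs with hne
  · obtain ⟨hK, hK_row⟩ : F.max' hne ∈ F ∧ μ r < μ (P (F.max' hne)).1 :=
      ⟨max'_mem F hne, hF_row _ (max'_mem F hne)⟩
    have hrows : {s ∈ range (n + 1) | μ s = μ r} = Ioc (P (F.max' hne)).1 r := by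
      ext s
      simp only [mem_filter, mem_range, mem_Ioc, hsame]
      constructor
      · rintro ⟨-, hle, hn⟩
        refine ⟨lt_of_not_ge fun hs => ?_, hle⟩
        have := hμ.antitone hs
        omega
      · rintro ⟨hlt, hle⟩
        refine ⟨by omega, hle, fun hs => ?_⟩
        obtain ⟨k, hk, rfl⟩ := hF_of_lt s hs
        exact (le_max' F k hk).not_gt
          (hcol _ k (by rw [hF_col _ hK, hF_col k hk]) hlt)
    rw [hrows, Nat.card_Ioc]
  · have hrows : {s ∈ range (n + 1) | μ s = μ r} = range (r + 1) := by
      ext s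
      simp only [mem_filter, mem_range, hsame]
      constructor
      · rintro ⟨-, hle, -⟩
        omega
      · intro hs
        refine ⟨by omega, by omega, fun h => ?_⟩
        obtain ⟨k, hk, -⟩ := hF_of_lt s h
        exact hne ⟨k, hk⟩
    rw [hrows, card_range]

end Tableau

lemma isSYTpos_snoc_iff {μ : ℕ → ℕ} {n r : ℕ} (hμ : IsPartitionOf μ (n + 1))
    (hr : r ∈ corners μ (n + 1)) {P : Fin n → ℕ × ℕ} :
    IsSYTpos μ (n + 1) (Fin.snoc P (r, μ r - 1)) ↔ IsSYTpos (removeCorner μ r) n P := by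
  obtain ⟨-, hcorner⟩ := mem_filter.1 hr
  have hcell : ∀ p : ℕ × ℕ, p.2 < removeCorner μ r p.1 ↔ p.2 < μ p.1 ∧ p ≠ (r, μ r - 1) :=
    fun p => lt_removeCorner_iff (by omega)
  rw [hμ.isSYTpos_iff, (isPartitionOf_removeCorner hμ hr).isSYTpos_iff, Fin.snoc_injective_iff]
  constructor
  · rintro ⟨⟨hinj, hx⟩, hmem, hsurj, hrow, hcol⟩
    refine ⟨hinj, fun i => ?_, fun p hp => ?_, fun i j => ?_, fun i j => ?_⟩
    · have := hmem i.castSucc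
      rw [Fin.snoc_castSucc] at this
      exact (hcell _).2 ⟨this, fun h => hx ⟨i, h⟩⟩
    · obtain ⟨hp, hpx⟩ := (hcell p).1 hp
      obtain ⟨j, hj⟩ := hsurj p hp
      induction j using Fin.lastCases with
      | last => exact absurd (by simpa using hj.symm) hpx
      | cast j => exact ⟨j, by simpa using hj⟩
    · simpa [Fin.castSucc_lt_castSucc_iff] using hrow i.castSucc j.castSucc
    · simpa [Fin.castSucc_lt_castSucc_iff] using hcol i.castSucc j.castSucc
  · rintro ⟨hinj, hmem, hsurj, hrow, hcol⟩
    have hmem' := fun i => (hcell (P i)).1 (hmem i)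
    refine ⟨⟨hinj, fun ⟨i, hi⟩ => (hmem' i).2 hi⟩, fun i => ?_, fun p hp => ?_, fun i j => ?_,
      fun i j => ?_⟩
    · induction i using Fin.lastCases with
      | last => simp only [Fin.snoc_last]; omega
      | cast i => simpa using (hmem' i).1
    · by_cases hpx : p = (r, μ r - 1)
      · exact ⟨Fin.last n, by simp [hpx]⟩
      · obtain ⟨j, hj⟩ := hsurj p ((hcell p).2 ⟨hp, hpx⟩)
        exact ⟨j.castSucc, by simpa using hj⟩
    · induction j using Fin.lastCases with
      | last =>
        intro _ hlt
        exact (Fin.le_last i).lt_of_ne (by rintro rfl; exact lt_irrefl _ hlt)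
      | cast j =>
        induction i using Fin.lastCases with
        | last =>
          simp only [Fin.snoc_last, Fin.snoc_castSucc]
          intro hrj hlt
          have := hmem j
          rw [← hrj, removeCorner_self] at this
          omega
        | cast i => simpa [Fin.castSucc_lt_castSucc_iff] using hrow i j
    · induction j using Fin.lastCases with
      | last =>
        intro _ hlt
        exact (Fin.le_last i).lt_of_ne (by rintro rfl; exact lt_irrefl _ hlt)
      | cast j =>
        induction i using Fin.lastCases with
        | last =>
          simp only [Fin.snoc_last, Fin.snoc_castSucc]
          intro hcj hlt
          have := (hmem' j).1
          have := hμ.antitone (show r + 1 ≤ (P j).1 from hlt)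
          omega
        | cast i => simpa [Fin.castSucc_lt_castSucc_iff] using hcol i j

lemma Set.ncard_eq_sum_ncard_fiberwise {α β : Type*} {s : Set α} (hs : s.Finite) {f : α → β}
    {t : Finset β} (H : Set.MapsTo f s t) : s.ncard = ∑ b ∈ t, (s ∩ f ⁻¹' {b}).ncard := by
  classical
  rw [Set.ncard_eq_toFinset_card s hs, card_eq_sum_card_fiberwise (by simpa using H)]
  refine sum_congr rfl fun b _ => ?_
  rw [Set.ncard_eq_toFinset_card _ (hs.inter_of_left _)]
  congr 1
  ext
  simp

def snocPair {n : ℕ} (x : ℕ × ℕ) (q : ℕ × (Fin n → ℕ × ℕ) × (Fin n → ℕ)) :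
    (Fin (n + 1) → ℕ × ℕ) × (Fin (n + 1) → ℕ) :=
  (Fin.snoc q.2.1 x, Fin.snoc q.2.2 q.1)

lemma snocPair_injective {n : ℕ} (x : ℕ × ℕ) : Injective (snocPair (n := n) x) := by
  rintro ⟨e, P, m⟩ ⟨e', P', m'⟩ h
  simp only [snocPair, Prod.mk.injEq, Fin.snoc_inj] at h
  simp [h]

lemma tableauPairs_inter_eq_image {μ : ℕ → ℕ} {n r : ℕ} (hμ : IsPartitionOf μ (n + 1))
    (hr : r ∈ corners μ (n + 1)) :
    tableauPairs μ (n + 1) ∩ (fun pm => (pm.1 (Fin.last n)).1) ⁻¹' {r} =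
      snocPair (r, μ r - 1) ''
        ((range #{s ∈ range (n + 1) | μ s = μ r} : Set ℕ) ×ˢ
          tableauPairs (removeCorner μ r) n) := by
  ext ⟨P, m⟩
  simp only [tableauPairs, snocPair, Set.mem_inter_iff, Set.mem_preimage, Set.mem_singleton_iff,
    Set.mem_ofPred_eq, Set.mem_image, Set.mem_prod, coe_range, Set.mem_Iio, Prod.exists,
    Prod.mk.injEq]
  constructor
  · rintro ⟨⟨hP, hm⟩, hPr⟩
    have hsnoc : Fin.snoc (Fin.init P) (r, μ r - 1) = P := by
      rw [← hPr, ← hP.last_eq hμ, Fin.snoc_init_self]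
    refine ⟨m (Fin.last n), Fin.init P, Fin.init m, ⟨?_, ?_, fun i => ?_⟩, hsnoc,
      Fin.snoc_init_self m⟩
    · simpa [hP.alpha_last hμ, hPr] using hm (Fin.last n)
    · exact (isSYTpos_snoc_iff hμ hr).1 (by rwa [hsnoc])
    · rw [← alpha_snoc, hsnoc]
      exact hm i.castSucc
  · rintro ⟨e, P', m', ⟨he, hP', hm'⟩, rfl, rfl⟩
    have hP := (isSYTpos_snoc_iff hμ hr).2 hP'
    refine ⟨⟨hP, fun i => ?_⟩, by simp⟩
    induction i using Fin.lastCases with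
    | last => simpa [hP.alpha_last hμ] using he
    | cast i => simpa [alpha_snoc] using hm' i

lemma IsPartitionOf.ncard_tableauPairs_succ {μ : ℕ → ℕ} {n : ℕ} (hμ : IsPartitionOf μ (n + 1)) :
    (tableauPairs μ (n + 1)).ncard = ∑ r ∈ corners μ (n + 1),
      #{s ∈ range (n + 1) | μ s = μ r} * (tableauPairs (removeCorner μ r) n).ncard := by
  rw [Set.ncard_eq_sum_ncard_fiberwise (tableauPairs_finite μ (n + 1))
    fun pm hpm => hpm.1.fst_last_mem_corners hμ]
  refine sum_congr rfl fun r hr => ?_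
  rw [tableauPairs_inter_eq_image hμ hr, Set.ncard_image_of_injective _ (snocPair_injective _),
    Set.ncard_prod, Set.ncard_coe_finset, card_range]

lemma tableauPairs_zero (μ : ℕ → ℕ) : tableauPairs μ 0 = Set.univ :=
  Set.eq_univ_of_forall fun _ =>
    ⟨⟨injective_of_subsingleton _, finZeroElim, fun p hp => by simp [diagOf] at hp,
      finZeroElim, finZeroElim⟩, finZeroElim⟩

theorem IsPartitionOf.ncard_tableauPairs_mul_prod_factorial {μ : ℕ → ℕ} {n : ℕ}
    (hμ : IsPartitionOf μ n) : (tableauPairs μ n).ncard * ∏ t ∈ range n, (μ t)! = n ! := by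
  induction n generalizing μ with
  | zero => simp [tableauPairs_zero]
  | succ n ih =>
    calc (tableauPairs μ (n + 1)).ncard * ∏ t ∈ range (n + 1), (μ t)!
        = ∑ r ∈ corners μ (n + 1), μ r * #{s ∈ range (n + 1) | μ s = μ r} *
            ((tableauPairs (removeCorner μ r) n).ncard *
              ∏ t ∈ range n, (removeCorner μ r t)!) := by
          rw [hμ.ncard_tableauPairs_succ, sum_mul]
          refine sum_congr rfl fun r hr => ?_
          rw [hμ.prod_factorial_eq hr]
          ring
      _ = ∑ r ∈ corners μ (n + 1), μ r * #{s ∈ range (n + 1) | μ s = μ r} * n ! :=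
          sum_congr rfl fun r hr => by rw [ih (isPartitionOf_removeCorner hμ hr)]
      _ = (n + 1)! := by
          rw [← sum_mul, sum_corners_mul_card_eq hμ.antitone (hμ.eq_zero _ le_rfl), hμ.sum_eq,
            factorial_succ]

/-- the number of pairs `(T, m)` with `T` a standard Young tableau of
shape `μ ⊢ n` and `m = (m_1,…,m_n)` with `0 ≤ m_i < α_T(i)` equals `n!/μ!`. -/
theorem stmt2 (n : ℕ) (μ : ℕ → ℕ) (hmono : Antitone μ)
    (hvanish : ∀ t, n ≤ t → μ t = 0) (hsum : ∑ t ∈ Finset.range n, μ t = n) :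
    (Nat.card {pm : (Fin n → ℕ × ℕ) × (Fin n → ℕ) //
        IsSYTpos μ n pm.1 ∧ ∀ i, pm.2 i < alpha n pm.1 i} : ℚ) =
      (n.factorial : ℚ) / ((∏ t ∈ Finset.range n, (μ t).factorial : ℕ) : ℚ) := by
  have h := (IsPartitionOf.mk hmono hvanish hsum).ncard_tableauPairs_mul_prod_factorial
  rw [← Nat.card_coe_set_eq] at h
  rw [eq_div_iff (by positivity)]
  exact_mod_cast h
end

section
/- Let D be an n-cell lattice diagram and let T and R be two injective tableaux of shape D. Then ∂Y_T applied to the monomial Z_R equals γ_D · X_R if R is obtained from T by a permutation of entries fixing every column, and equals 0 otherwise. Here Y_T = Π_{(r,c)∈D} y_{T(r,c)}^c, X_R = Π_{(r,c)∈D} x_{R(r,c)}^r, Z_R = X_R Y_R, ∂Y_T is the differential operator obtained from Y_T by replacing each y_k with ∂/∂y_k, and γ_D = Π_{(r,c)∈D} c!. -/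
/-- The monomial `Z_T = Π_j x_{T(r_j,c_j)}^{r_j} y_{T(r_j,c_j)}^{c_j}` associated to an
injective tableau, viewed as a bijection `T` sending the cell of lex-index `j` to the
entry `T j` (entries taken in `Fin n`). -/
noncomputable def Zmon (n : ℕ) (r c : Fin n → ℕ) (T : Equiv.Perm (Fin n)) :
    MvPolynomial (Fin n ⊕ Fin n) ℚ :=
  ∏ j : Fin n, MvPolynomial.X (Sum.inl (T j)) ^ r j * MvPolynomial.X (Sum.inr (T j)) ^ c j

/-- The monomial `X_R = Π_j x_{R(r_j,c_j)}^{r_j}`. -/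
noncomputable def XmonT (n : ℕ) (r : Fin n → ℕ) (R : Equiv.Perm (Fin n)) :
    MvPolynomial (Fin n ⊕ Fin n) ℚ :=
  ∏ j : Fin n, MvPolynomial.X (Sum.inl (R j)) ^ r j

/-- The operator `∂Y_T`, obtained from `Y_T = Π_j y_{T j}^{c j}` by replacing each
variable `y_k` by `∂/∂y_k`. -/
noncomputable def dYcol (n : ℕ) (c : Fin n → ℕ) (T : Equiv.Perm (Fin n))
    (P : MvPolynomial (Fin n ⊕ Fin n) ℚ) : MvPolynomial (Fin n ⊕ Fin n) ℚ :=
  (List.finRange n).foldl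
    (fun Q j => (fun R => MvPolynomial.pderiv (Sum.inr (T j)) R)^[c j] Q) P

/-!
Each partial derivative sends a monomial to a scalar multiple of a monomial, so `∂Y_T Z_R` is
the monomial `Z_R / Y_T` times `∏_j (c_R(T j))_(c_j)`, a product of falling factorials, where
`c_R(m)` is the column of the entry `m` in `R`. If every entry sits in the same column in `T`
and in `R`, then `Y_T = Y_R`, the quotient is `X_R` and each falling factorial is `c_j!`.
Otherwise, since both column functions have the same total `∑_j c_j`, some entry `m` has a
smaller column in `R` than in `T`, and its falling factorial vanishes.
-/

open MvPolynomial

section IteratedDerivative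

variable {R σ ι : Type*} [CommSemiring R]

theorem iterate_pderiv_monomial (v : σ) (k : ℕ) (e : σ →₀ ℕ) (a : R) :
    (fun P => pderiv v P)^[k] (monomial e a)
      = monomial (e - Finsupp.single v k) ((e v).descFactorial k * a) := by
  induction k generalizing e a with
  | zero => simp
  | succ k ih =>
    rw [Function.iterate_succ_apply, pderiv_monomial, ih, tsub_tsub, ← Finsupp.single_add,
      Finsupp.tsub_apply, Finsupp.single_eq_same, add_comm 1 k]
    have hfalling : e v * (e v - 1).descFactorial k = (e v).descFactorial (k + 1) := by
      cases e v with
      | zero => simp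
      | succ m => rw [Nat.add_sub_cancel, Nat.succ_descFactorial_succ]
    rw [← hfalling, Nat.cast_mul]
    ring_nf

theorem foldl_iterate_pderiv_monomial (v : ι → σ) (k : ι → ℕ) (L : List ι)
    (hL : (L.map v).Nodup) (e : σ →₀ ℕ) (a : R) :
    L.foldl (fun Q j => (fun P => pderiv (v j) P)^[k j] Q) (monomial e a)
      = monomial (e - (L.map fun j => Finsupp.single (v j) (k j)).sum)
          ((L.map fun j => ((e (v j)).descFactorial (k j) : R)).prod * a) := by
  induction L generalizing e a with
  | nil => simp
  | cons j L ih =>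
    rw [List.map_cons, List.nodup_cons, List.mem_map] at hL
    obtain ⟨hj, hL⟩ := hL
    have h_untouched : ∀ i ∈ L, (e - Finsupp.single (v j) (k j)) (v i) = e (v i) := fun i hi => by
      rw [Finsupp.tsub_apply, Finsupp.single_eq_of_ne (fun h => hj ⟨i, hi, h⟩), Nat.sub_zero]
    have hprod : (L.map fun i => (((e - Finsupp.single (v j) (k j)) (v i)).descFactorial (k i) : R))
        = L.map fun i => ((e (v i)).descFactorial (k i) : R) :=
      List.map_congr_left fun i hi => by rw [h_untouched i hi]
    rw [List.foldl_cons, iterate_pderiv_monomial, ih hL, hprod, List.map_cons, List.sum_cons,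
      tsub_tsub, List.map_cons, List.prod_cons]
    ring_nf

end IteratedDerivative

theorem Finset.exists_lt_of_sum_eq_of_not_forall_eq {ι M : Type*} [AddCommMonoid M]
    [LinearOrder M] [IsOrderedCancelAddMonoid M] {s : Finset ι} {f g : ι → M}
    (hsum : ∑ i ∈ s, f i = ∑ i ∈ s, g i) (hne : ¬ ∀ i ∈ s, f i = g i) : ∃ i ∈ s, g i < f i := by
  by_contra! hle
  exact hne ((Finset.sum_eq_sum_iff_of_le hle).1 hsum)

section Tableaux

variable {n : ℕ}

noncomputable def xExponent (r : Fin n → ℕ) (R : Equiv.Perm (Fin n)) : Fin n ⊕ Fin n →₀ ℕ :=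
  ∑ j, Finsupp.single (Sum.inl (R j)) (r j)

noncomputable def yExponent (c : Fin n → ℕ) (R : Equiv.Perm (Fin n)) : Fin n ⊕ Fin n →₀ ℕ :=
  ∑ j, Finsupp.single (Sum.inr (R j)) (c j)

theorem Zmon_eq_monomial (r c : Fin n → ℕ) (R : Equiv.Perm (Fin n)) :
    Zmon n r c R = monomial (xExponent r R + yExponent c R) 1 := by
  rw [xExponent, yExponent, ← Finset.sum_add_distrib, monomial_sum_one]
  refine Finset.prod_congr rfl fun j _ => ?_
  rw [X_pow_eq_monomial, X_pow_eq_monomial, monomial_mul, mul_one]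

theorem XmonT_eq_monomial (r : Fin n → ℕ) (R : Equiv.Perm (Fin n)) :
    XmonT n r R = monomial (xExponent r R) 1 := by
  rw [XmonT, xExponent, monomial_sum_one]
  exact Finset.prod_congr rfl fun j _ => X_pow_eq_monomial

theorem xExponent_apply_inr (r : Fin n → ℕ) (R : Equiv.Perm (Fin n)) (m : Fin n) :
    xExponent r R (Sum.inr m) = 0 := by
  simp [xExponent, Finsupp.finsetSum_apply]

theorem yExponent_eq_sum_symm (c : Fin n → ℕ) (R : Equiv.Perm (Fin n)) :
    yExponent c R = ∑ m, Finsupp.single (Sum.inr m) (c (R.symm m)) := by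
  rw [yExponent, ← Equiv.sum_comp R fun m => Finsupp.single (Sum.inr m) (c (R.symm m))]
  simp only [Equiv.symm_apply_apply]

theorem yExponent_apply_inr (c : Fin n → ℕ) (R : Equiv.Perm (Fin n)) (m : Fin n) :
    yExponent c R (Sum.inr m) = c (R.symm m) := by
  simp [yExponent_eq_sum_symm, Finsupp.finsetSum_apply, Finsupp.single_apply]

theorem dYcol_monomial (c : Fin n → ℕ) (T : Equiv.Perm (Fin n)) (e : Fin n ⊕ Fin n →₀ ℕ)
    (a : ℚ) :
    dYcol n c T (monomial e a)
      = monomial (e - yExponent c T) ((∏ j, ((e (Sum.inr (T j))).descFactorial (c j) : ℚ)) * a) := by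
  have hnodup : ((List.finRange n).map (Sum.inr ∘ T : Fin n → Fin n ⊕ Fin n)).Nodup :=
    (List.nodup_finRange n).map (Sum.inr_injective.comp T.injective)
  rw [dYcol, yExponent, Fin.sum_univ_def, Fin.prod_univ_def]
  exact foldl_iterate_pderiv_monomial (Sum.inr ∘ T) c _ hnodup e a

theorem dYcol_Zmon (r c : Fin n → ℕ) (T R : Equiv.Perm (Fin n)) :
    dYcol n c T (Zmon n r c R)
      = monomial (xExponent r R + yExponent c R - yExponent c T)
          (∏ j, ((c (R.symm (T j))).descFactorial (c j) : ℚ)) := by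
  simp only [Zmon_eq_monomial, dYcol_monomial, mul_one, Finsupp.add_apply, xExponent_apply_inr,
    yExponent_apply_inr, zero_add]

end Tableaux

theorem stmt7_general (n : ℕ) (r c : Fin n → ℕ)
    (T R : Equiv.Perm (Fin n)) :
    ((∀ m : Fin n, c (T.symm m) = c (R.symm m)) →
        dYcol n c T (Zmon n r c R) = (∏ j : Fin n, (c j).factorial) • XmonT n r R) ∧
      ((¬ ∀ m : Fin n, c (T.symm m) = c (R.symm m)) →
        dYcol n c T (Zmon n r c R) = 0) := by
  rw [dYcol_Zmon]
  constructor
  · intro hcol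
    have hY : yExponent c T = yExponent c R := by
      simp only [yExponent_eq_sum_symm, hcol]
    have hcoeff : ∀ j, (c (R.symm (T j))).descFactorial (c j) = (c j).factorial := fun j => by
      rw [← hcol, Equiv.symm_apply_apply, Nat.descFactorial_self]
    rw [hY, add_tsub_cancel_right, XmonT_eq_monomial, ← Nat.cast_smul_eq_nsmul ℚ, smul_monomial,
      smul_eq_mul, mul_one, Nat.cast_prod]
    simp only [hcoeff]
  · intro hcol
    have hsum : ∑ m, c (T.symm m) = ∑ m, c (R.symm m) := by
      rw [Equiv.sum_comp T.symm c, Equiv.sum_comp R.symm c]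
    obtain ⟨m, -, hm⟩ :=
      Finset.exists_lt_of_sum_eq_of_not_forall_eq hsum (by simpa using hcol)
    have hzero : (c (R.symm (T (T.symm m)))).descFactorial (c (T.symm m)) = 0 := by
      rwa [Equiv.apply_symm_apply, Nat.descFactorial_eq_zero_iff_lt]
    rw [Finset.prod_eq_zero (Finset.mem_univ _) (by exact_mod_cast hzero), monomial_zero]

/-- `∂Y_T Z_R = γ_D · X_R` if `R` is obtained from `T` by a column-fixing
permutation of the entries (equivalently, every entry lies in the same column in `T`
and in `R`), and `∂Y_T Z_R = 0` otherwise. Here `γ_D = Π_{(r,c) ∈ D} c!`. -/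
theorem stmt7 (n : ℕ) (r c : Fin n → ℕ)
    (hinj : Function.Injective fun j => (r j, c j))
    (T R : Equiv.Perm (Fin n)) :
    ((∀ m : Fin n, c (T.symm m) = c (R.symm m)) →
        dYcol n c T (Zmon n r c R) = (∏ j : Fin n, (c j).factorial) • XmonT n r R) ∧
      ((¬ ∀ m : Fin n, c (T.symm m) = c (R.symm m)) →
        dYcol n c T (Zmon n r c R) = 0) :=
  stmt7_general n r c T R
end

section
/- Let μ be a partition of n+1 and (i,j) a cell of μ such that (i+1,j) ∈ μ. Then D_X Δ_{μ/ij}(X,Y) equals a nonzero constant times Δ_{μ/(i+1),j}(X,Y), where D_X = ∂/∂x_1 + ... + ∂/∂x_{n+1} restricted to the n variables appearing, and μ/ij denotes the n-cell lattice diagram obtained from μ by deleting the cell (i,j). If (i+1,j) ∉ μ, then D_X Δ_{μ/ij}(X,Y) = 0. -/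
/-!
Since `D_X` is a derivation, it acts on `Δ_{μ/ij}` column by column, and on the column of a cell
`(r, c)` it produces `r` times the column of `(r - 1, c)`. So `D_X Δ_{μ/ij}` is the sum over the
cells of `μ/ij` of `r · Δ` of the diagram with that cell lowered by one row. Because `μ` is a
partition, either the cell is in row `0` (coefficient `r = 0`) or the lowered cell is already in
`μ/ij` (a repeated column, so the term vanishes), except for the cell `(i+1, j)`: lowering it fills
the hole at `(i, j)` and yields the diagram `μ/(i+1)j`, with coefficient `i + 1`, up to reordering
the cells.
-/

open MvPolynomial Function Set

/-- The lattice determinant `Δ_D(X;Y) = det(x_i^{r_j} y_i^{c_j})` of the `n`-cell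
diagram `D = {(r_1,c_1),…,(r_n,c_n)}`; `Sum.inl i` is the variable `x_{i+1}` and
`Sum.inr i` is the variable `y_{i+1}`. -/
noncomputable def latticeDetL (n : ℕ) (r c : Fin n → ℕ) : MvPolynomial (Fin n ⊕ Fin n) ℚ :=
  Matrix.det (Matrix.of fun i j : Fin n =>
    MvPolynomial.X (Sum.inl i) ^ r j * MvPolynomial.X (Sum.inr i) ^ c j)

/-- The polarization operator `D_X = ∂_{x_1} + ⋯ + ∂_{x_n}`. -/
noncomputable def DXop (n : ℕ) (P : MvPolynomial (Fin n ⊕ Fin n) ℚ) :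
    MvPolynomial (Fin n ⊕ Fin n) ℚ :=
  ∑ a : Fin n, MvPolynomial.pderiv (Sum.inl a) P

namespace Derivation

open Finset

variable {R A : Type*} [CommRing R] [CommRing A] [Algebra R A]

theorem map_finset_prod {ι : Type*} [DecidableEq ι] (D : Derivation R A A) (s : Finset ι)
    (f : ι → A) : D (∏ i ∈ s, f i) = ∑ i ∈ s, (∏ k ∈ s.erase i, f k) * D (f i) := by
  induction s using Finset.induction_on with
  | empty => simp
  | @insert a s ha ih =>
    rw [prod_insert ha, leibniz, ih, sum_insert ha, erase_insert ha, smul_eq_mul, smul_eq_mul,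
      mul_sum, add_comm]
    refine congrArg _ (sum_congr rfl fun x hx => ?_)
    rw [erase_insert_of_ne (ne_of_mem_of_not_mem hx ha).symm,
      prod_insert fun h => ha (mem_of_mem_erase h)]
    ring

theorem map_det {m : Type*} [Fintype m] [DecidableEq m] (D : Derivation R A A)
    (M : Matrix m m A) : D M.det = ∑ j, (M.updateCol j fun i => D (M i j)).det := by
  simp only [Matrix.det_apply, map_sum, Units.smul_def, map_zsmul, map_finset_prod]
  rw [sum_comm]
  refine sum_congr rfl fun σ _ => ?_
  rw [smul_sum]
  refine sum_congr rfl fun j _ => ?_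
  rw [← mul_prod_erase univ _ (mem_univ j)]
  simp only [Matrix.updateCol_self]
  rw [prod_congr rfl fun k hk => Matrix.updateCol_ne (ne_of_mem_erase hk), mul_comm]

end Derivation

theorem Function.exists_perm_comp_eq_of_range_eq {ι α : Type*} [Finite ι] {f g : ι → α}
    (hg : Injective g) (h : range f = range g) : ∃ e : Equiv.Perm ι, g ∘ e = f := by
  have hfg : ∀ k, ∃ k', g k' = f k := fun k => by
    rw [← Set.mem_range, ← h]
    exact mem_range_self k
  choose τ hτ using hfg
  have hτ_surj : Surjective τ := fun k' => by
    obtain ⟨k, hk⟩ : g k' ∈ range f := h ▸ mem_range_self k'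
    exact ⟨k, hg ((hτ k).trans hk)⟩
  exact ⟨Equiv.ofBijective τ ⟨Finite.injective_iff_surjective.2 hτ_surj, hτ_surj⟩, funext hτ⟩

theorem Set.range_update_of_injective {ι α : Type*} [DecidableEq ι] {f : ι → α}
    (hf : Injective f) (b : ι) (y : α) : range (update f b y) = insert y (range f \ {f b}) := by
  ext p
  constructor
  · rintro ⟨k, rfl⟩
    rcases eq_or_ne k b with rfl | hk
    · simp
    · simp [hk, hf.ne hk]
  · rintro (rfl | ⟨⟨k, rfl⟩, hk⟩)
    · exact ⟨b, update_self ..⟩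
    · exact ⟨k, update_of_ne (by rintro rfl; exact hk rfl) ..⟩

section LatticeDeterminant

variable {n : ℕ}

noncomputable def polarizationX (n : ℕ) :
    Derivation ℚ (MvPolynomial (Fin n ⊕ Fin n) ℚ) (MvPolynomial (Fin n ⊕ Fin n) ℚ) :=
  ∑ a : Fin n, pderiv (Sum.inl a)

theorem DXop_eq_polarizationX (P : MvPolynomial (Fin n ⊕ Fin n) ℚ) :
    DXop n P = polarizationX n P := by
  simp only [DXop, polarizationX, ← Derivation.coeFnAddMonoidHom_apply, map_sum,
    Finset.sum_apply]

theorem polarizationX_X_pow_mul_X_pow (u : Fin n) (p q : ℕ) :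
    polarizationX n (X (Sum.inl u) ^ p * X (Sum.inr u) ^ q)
      = (p : MvPolynomial (Fin n ⊕ Fin n) ℚ) * (X (Sum.inl u) ^ (p - 1) * X (Sum.inr u) ^ q) := by
  rw [← DXop_eq_polarizationX, DXop, Finset.sum_eq_single u]
  · simp
    ring
  · intro a _ hau
    simp [Ne.symm hau]
  · simp

theorem DXop_latticeDetL (r c : Fin n → ℕ) :
    DXop n (latticeDetL n r c)
      = ∑ b, (r b : ℚ) • latticeDetL n (update r b (r b - 1)) c := by
  rw [DXop_eq_polarizationX, latticeDetL, Derivation.map_det]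
  refine Finset.sum_congr rfl fun b _ => ?_
  simp only [Matrix.of_apply, polarizationX_X_pow_mul_X_pow]
  -- present the new column as `r b • v`, so that `det_updateCol_smul` pulls the factor out
  simp only [← smul_eq_mul (a := ((r b : ℕ) : MvPolynomial (Fin n ⊕ Fin n) ℚ))]
  rw [← Pi.smul_def, Matrix.det_updateCol_smul, Nat.cast_smul_eq_nsmul, nsmul_eq_mul]
  congr 2
  ext a k
  rcases eq_or_ne k b with rfl | hk
  · simp
  · simp [hk]

theorem latticeDetL_eq_zero_of_eq {r c : Fin n → ℕ} {k b : Fin n} (hkb : k ≠ b)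
    (hr : r k = r b) (hc : c k = c b) : latticeDetL n r c = 0 :=
  Matrix.det_zero_of_column_eq hkb fun a => by simp [hr, hc]

theorem latticeDetL_comp_perm (r c : Fin n → ℕ) (e : Equiv.Perm (Fin n)) :
    latticeDetL n (r ∘ e) (c ∘ e) = ((Equiv.Perm.sign e : ℤ) : ℚ) • latticeDetL n r c := by
  rw [smul_eq_C_mul, map_intCast, latticeDetL, latticeDetL, ← Matrix.det_permute']
  rfl

theorem latticeDetL_eq_sign_smul_of_range_eq {r c r' c' : Fin n → ℕ}
    (hinj' : Injective fun k => (r' k, c' k))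
    (h : (range fun k => (r k, c k)) = range fun k => (r' k, c' k)) :
    ∃ ε : ℤˣ, latticeDetL n r c = ((ε : ℤ) : ℚ) • latticeDetL n r' c' := by
  obtain ⟨e, he⟩ := exists_perm_comp_eq_of_range_eq hinj' h
  have hr : r' ∘ e = r := funext fun k => congrArg Prod.fst (congrFun he k)
  have hc : c' ∘ e = c := funext fun k => congrArg Prod.snd (congrFun he k)
  exact ⟨Equiv.Perm.sign e, hr ▸ hc ▸ latticeDetL_comp_perm r' c' e⟩

theorem smul_latticeDetL_update_pred_eq_zero {r c : Fin n → ℕ} {b : Fin n}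
    (h : 0 < r b → (r b - 1, c b) ∈ range fun k => (r k, c k)) :
    (r b : ℚ) • latticeDetL n (update r b (r b - 1)) c = 0 := by
  rcases Nat.eq_zero_or_pos (r b) with h0 | hpos
  · simp [h0]
  · obtain ⟨k, hk⟩ := h hpos
    obtain ⟨hrk, hck⟩ := Prod.mk.inj hk
    have hkb : k ≠ b := by rintro rfl; omega
    rw [latticeDetL_eq_zero_of_eq hkb (by simp [hkb, hrk]) hck, smul_zero]

end LatticeDeterminant

def diagramCells (μ : ℕ → ℕ) : Set (ℕ × ℕ) := {p | p.2 < μ p.1}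

theorem pred_mem_diagramCells_diff {μ : ℕ → ℕ} (hμ : Antitone μ) {i j : ℕ} {p : ℕ × ℕ}
    (hp : p ∈ diagramCells μ \ {(i, j)}) (hp₀ : 0 < p.1) (hpi : p ≠ (i + 1, j)) :
    (p.1 - 1, p.2) ∈ diagramCells μ \ {(i, j)} := by
  obtain ⟨a, b⟩ := p
  obtain ⟨hlt, hne⟩ := hp
  refine ⟨hlt.trans_le (hμ (Nat.sub_le a 1)), ?_⟩
  simp only [mem_singleton_iff, ne_eq, Prod.mk.injEq] at hne hpi ⊢
  omega

theorem range_update_fst_of_injective {ι α β : Type*} [DecidableEq ι] {r : ι → α} {c : ι → β}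
    (hinj : Injective fun k => (r k, c k)) (b : ι) (a : α) :
    (range fun k => (update r b a k, c k))
      = insert (a, c b) ((range fun k => (r k, c k)) \ {(r b, c b)}) := by
  have hlower : (fun k => (update r b a k, c k)) = update (fun k => (r k, c k)) b (a, c b) := by
    funext k
    rcases eq_or_ne k b with rfl | hk
    · simp
    · simp [hk]
  rw [hlower, range_update_of_injective hinj]

section DiagramMinusCell

variable {n : ℕ} {μ : ℕ → ℕ} {i j : ℕ} {r c : Fin n → ℕ}

theorem smul_latticeDetL_update_pred_eq_zero_of_ne (hμ : Antitone μ)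
    (hD : (range fun k => (r k, c k)) = diagramCells μ \ {(i, j)}) {b : Fin n}
    (hb : (r b, c b) ≠ (i + 1, j)) :
    (r b : ℚ) • latticeDetL n (update r b (r b - 1)) c = 0 :=
  smul_latticeDetL_update_pred_eq_zero fun hpos =>
    hD ▸ pred_mem_diagramCells_diff hμ (hD ▸ mem_range_self b) hpos hb

theorem DXop_latticeDetL_eq_zero (hμ : Antitone μ)
    (hD : (range fun k => (r k, c k)) = diagramCells μ \ {(i, j)}) (hj : μ (i + 1) ≤ j) :
    DXop n (latticeDetL n r c) = 0 := by
  rw [DXop_latticeDetL]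
  refine Finset.sum_eq_zero fun b _ =>
    smul_latticeDetL_update_pred_eq_zero_of_ne hμ hD fun h => ?_
  have hb : (r b, c b) ∈ diagramCells μ \ {(i, j)} := hD ▸ mem_range_self b
  rw [h] at hb
  exact not_lt.2 hj hb.1

theorem DXop_latticeDetL_eq_smul_update (hμ : Antitone μ)
    (hD : (range fun k => (r k, c k)) = diagramCells μ \ {(i, j)})
    (hinj : Injective fun k => (r k, c k)) {b₀ : Fin n} (hb₀ : (r b₀, c b₀) = (i + 1, j)) :
    DXop n (latticeDetL n r c) = (i + 1 : ℚ) • latticeDetL n (update r b₀ i) c := by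
  obtain ⟨hr₀, -⟩ := Prod.mk.inj hb₀
  rw [DXop_latticeDetL, Finset.sum_eq_single b₀ (fun b _ hb =>
    smul_latticeDetL_update_pred_eq_zero_of_ne hμ hD fun h => hb (hinj (h.trans hb₀.symm)))
    (by simp), hr₀]
  simp

end DiagramMinusCell

theorem stmt8_general (n : ℕ) (μ : ℕ → ℕ) (hmono : Antitone μ)
    (i j : ℕ) (hij : j < μ i)
    (r c : Fin n → ℕ)
    (hinj : Function.Injective fun k => (r k, c k))
    (hcells : ∀ p : ℕ × ℕ,
      (p ∈ Set.range fun k => (r k, c k)) ↔ (p.2 < μ p.1 ∧ p ≠ (i, j))) :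
    (∀ r' c' : Fin n → ℕ,
        Function.Injective (fun k => (r' k, c' k)) →
        (∀ p : ℕ × ℕ,
          (p ∈ Set.range fun k => (r' k, c' k)) ↔ (p.2 < μ p.1 ∧ p ≠ (i + 1, j))) →
        j < μ (i + 1) →
        ∃ k : ℚ, k ≠ 0 ∧ DXop n (latticeDetL n r c) = k • latticeDetL n r' c') ∧
      (μ (i + 1) ≤ j → DXop n (latticeDetL n r c) = 0) := by
  have hD : (range fun k => (r k, c k)) = diagramCells μ \ {(i, j)} := Set.ext hcells
  refine ⟨fun r' c' hinj' hcells' hj => ?_, DXop_latticeDetL_eq_zero hmono hD⟩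
  have hD' : (range fun k => (r' k, c' k)) = diagramCells μ \ {(i + 1, j)} := Set.ext hcells'
  obtain ⟨b₀, hb₀⟩ : ∃ b₀, (r b₀, c b₀) = (i + 1, j) := (hcells _).2 ⟨hj, by simp⟩
  have hrange : (range fun k => (update r b₀ i k, c k)) = range fun k => (r' k, c' k) := by
    rw [range_update_fst_of_injective hinj, hb₀, (Prod.mk.inj hb₀).2, hD, hD',
      insert_sdiff_singleton_comm (by simp), insert_sdiff_singleton,
      insert_eq_of_mem (show (i, j) ∈ diagramCells μ from hij)]
  obtain ⟨ε, hε⟩ := latticeDetL_eq_sign_smul_of_range_eq hinj' hrange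
  refine ⟨(i + 1 : ℚ) * ε, mul_ne_zero (by positivity) (by simp), ?_⟩
  rw [DXop_latticeDetL_eq_smul_update hmono hD hinj hb₀, hε, smul_smul]

/-- for a partition `μ` of `n+1` and `(i,j) ∈ μ`, if `(i+1,j) ∈ μ` then
`D_X Δ_{μ/ij} = cte · Δ_{μ/(i+1)j}` for a nonzero constant, and if `(i+1,j) ∉ μ` then
`D_X Δ_{μ/ij} = 0`.  The `n`-cell diagrams `μ/ij` and `μ/(i+1)j` are presented by
arbitrary injective listings of their cells. -/
theorem stmt8 (n : ℕ) (μ : ℕ → ℕ) (hmono : Antitone μ)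
    (hvanish : ∀ t, n + 1 ≤ t → μ t = 0)
    (hsum : ∑ t ∈ Finset.range (n + 1), μ t = n + 1)
    (i j : ℕ) (hij : j < μ i)
    (r c : Fin n → ℕ)
    (hinj : Function.Injective fun k => (r k, c k))
    (hcells : ∀ p : ℕ × ℕ,
      (p ∈ Set.range fun k => (r k, c k)) ↔ (p.2 < μ p.1 ∧ p ≠ (i, j))) :
    (∀ r' c' : Fin n → ℕ,
        Function.Injective (fun k => (r' k, c' k)) →
        (∀ p : ℕ × ℕ,
          (p ∈ Set.range fun k => (r' k, c' k)) ↔ (p.2 < μ p.1 ∧ p ≠ (i + 1, j))) →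
        j < μ (i + 1) →
        ∃ k : ℚ, k ≠ 0 ∧ DXop n (latticeDetL n r c) = k • latticeDetL n r' c') ∧
      (μ (i + 1) ≤ j → DXop n (latticeDetL n r c) = 0) :=
  stmt8_general n μ hmono i j hij r c hinj hcells
end
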